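/- arXiv:2306.07714 — 2 statements merged into one kernel-verified Lean document; each statement's English description precedes it below -/
import Mathlib

section
/- Let C ⊆ ℝⁿ be a closed convex set and let B ⊆ ℝⁿ be a bounded set. Suppose there are points p, q ∈ C∖B that lie in two distinct connected components of C∖B, and that both of these connected components are unbounded. Then C contains a full line: there exist x ∈ ℝⁿ and v ∈ ℝⁿ with v ≠ 0 such that x + t·v ∈ C for all t ∈ ℝ. -/
open Filter Topology Metric Bornology

/-- If a closed convex set contains `p` and points `x k` going to infinity whose
normalizations converge to `u`, then the ray `p + t • u`, `t ≥ 0`, lies in the set. -/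
lemma ray_mem_of_tendsto {E : Type*} [NormedAddCommGroup E] [NormedSpace ℝ E]
    {C : Set E} (hC : Convex ℝ C) (hcl : IsClosed C)
    {p : E} (hp : p ∈ C) {x : ℕ → E} (hx : ∀ k, x k ∈ C)
    (hnorm : Tendsto (fun k => ‖x k‖) atTop atTop)
    {u : E} (hu : Tendsto (fun k => ‖x k‖⁻¹ • x k) atTop (𝓝 u))
    {t : ℝ} (ht : 0 ≤ t) : p + t • u ∈ C := by
  have hinv : Tendsto (fun k => ‖x k‖⁻¹) atTop (𝓝 0) := tendsto_inv_atTop_zero.comp hnorm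
  have hc : Tendsto (fun k => t * ‖x k‖⁻¹) atTop (𝓝 0) := by
    simpa using hinv.const_mul t
  have hlim : Tendsto (fun k => p - (t * ‖x k‖⁻¹) • p + t • (‖x k‖⁻¹ • x k)) atTop
      (𝓝 (p + t • u)) := by
    have h1 := (tendsto_const_nhds (x := p) (f := atTop)).sub (hc.smul_const p)
    have h2 := hu.const_smul t
    simpa using h1.add h2
  refine hcl.mem_of_tendsto hlim ?_
  filter_upwards [hnorm.eventually_ge_atTop (max t 1)] with k hk
  have hx0 : (0:ℝ) < ‖x k‖ := lt_of_lt_of_le one_pos (le_trans (le_max_right t 1) hk)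
  have htle : t ≤ ‖x k‖ := le_trans (le_max_left t 1) hk
  have hcoef : t * ‖x k‖⁻¹ ≤ 1 := by
    rw [← div_eq_mul_inv, div_le_one hx0]; exact htle
  have hcoef0 : 0 ≤ t * ‖x k‖⁻¹ := mul_nonneg ht (inv_nonneg.mpr hx0.le)
  have heq : p - (t * ‖x k‖⁻¹) • p + t • (‖x k‖⁻¹ • x k)
      = (1 - t * ‖x k‖⁻¹) • p + (t * ‖x k‖⁻¹) • x k := by
    rw [smul_smul, sub_smul, one_smul]
  rw [heq]
  exact hC hp (hx k) (by linarith) hcoef0 (by ring)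

/-- If a closed convex set contains `p` and the ray `q - t • u`, `t ≥ 0`, then it
contains the ray `p - r • u`, `r ≥ 0`. -/
lemma opp_ray_mem {E : Type*} [NormedAddCommGroup E] [NormedSpace ℝ E]
    {C : Set E} (hC : Convex ℝ C) (hcl : IsClosed C)
    {p q u : E} (hp : p ∈ C)
    (h2 : ∀ t : ℝ, 0 ≤ t → q - t • u ∈ C) {r : ℝ} (hr : 0 ≤ r) :
    p - r • u ∈ C := by
  have hspos : ∀ k : ℕ, (0:ℝ) < (r + 1) * (k + 1) := fun k => by positivity
  have hθmem : ∀ k : ℕ, 0 ≤ r / ((r + 1) * (k + 1)) ∧ r / ((r + 1) * (k + 1)) ≤ 1 := by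
    intro k
    constructor
    · exact div_nonneg hr (hspos k).le
    · rw [div_le_one (hspos k)]
      nlinarith [Nat.cast_nonneg (α := ℝ) k]
  have hmem : ∀ k : ℕ, p + (r / ((r + 1) * (k + 1))) • (q - p) - r • u ∈ C := by
    intro k
    have hs0 : ((r + 1) * ((k:ℝ) + 1)) ≠ 0 := (hspos k).ne'
    have h1 : (1 - r / ((r + 1) * (k + 1))) • p
        + (r / ((r + 1) * (k + 1))) • (q - ((r + 1) * (k + 1)) • u) ∈ C :=
      hC hp (h2 ((r + 1) * (k + 1)) (hspos k).le)
        (by linarith [(hθmem k).2]) (hθmem k).1 (by ring)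
    have heq : (1 - r / ((r + 1) * (k + 1))) • p
        + (r / ((r + 1) * (k + 1))) • (q - ((r + 1) * (k + 1)) • u)
        = p + (r / ((r + 1) * (k + 1))) • (q - p) - r • u := by
      rw [sub_smul, one_smul, smul_sub, smul_sub, smul_smul,
        div_mul_cancel₀ _ hs0]
      abel
    rw [heq] at h1
    exact h1
  have hstop : Tendsto (fun k : ℕ => (r + 1) * ((k:ℝ) + 1)) atTop atTop := by
    apply Tendsto.const_mul_atTop (by linarith : (0:ℝ) < r + 1)
    exact tendsto_atTop_add_const_right _ 1 tendsto_natCast_atTop_atTop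
  have hθ0 : Tendsto (fun k : ℕ => r / ((r + 1) * ((k:ℝ) + 1))) atTop (𝓝 0) :=
    Tendsto.div_atTop tendsto_const_nhds hstop
  have hlim : Tendsto (fun k : ℕ => p + (r / ((r + 1) * (k + 1))) • (q - p) - r • u)
      atTop (𝓝 (p - r • u)) := by
    have h1 := hθ0.smul_const (q - p)
    have := ((tendsto_const_nhds (x := p) (f := atTop)).add h1).sub
      (tendsto_const_nhds (x := r • u) (f := atTop))
    simpa using this
  exact hcl.mem_of_tendsto hlim (Eventually.of_forall hmem)

lemma smul_comb_eq {E : Type*} [NormedAddCommGroup E] [NormedSpace ℝ E]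
    {a : ℝ} (ha : a ≠ 0) (X Y : E) (b : ℝ) :
    X + (b / a) • Y = a⁻¹ • (a • X + b • Y) := by
  rw [smul_add, smul_smul, smul_smul, inv_mul_cancel₀ ha, one_smul, inv_mul_eq_div]

/-- Let `C ⊆ ℝⁿ` be a closed convex set and `B ⊆ ℝⁿ` a bounded set.
Suppose there are points `p, q ∈ C \ B` lying in two distinct connected components of
`C \ B`, and that both of these connected components are unbounded. Then `C` contains a
full line: there exist `x` and `v ≠ 0` with `x + t • v ∈ C` for all `t : ℝ`. -/
theorem convex_contains_line_of_two_unbounded_components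
    {n : ℕ} (C B : Set (EuclideanSpace ℝ (Fin n)))
    (hC : Convex ℝ C) (hCcl : IsClosed C) (hB : Bornology.IsBounded B)
    (p q : EuclideanSpace ℝ (Fin n)) (hp : p ∈ C \ B) (hq : q ∈ C \ B)
    (hne : connectedComponentIn (C \ B) p ≠ connectedComponentIn (C \ B) q)
    (hpu : ¬ Bornology.IsBounded (connectedComponentIn (C \ B) p))
    (hqu : ¬ Bornology.IsBounded (connectedComponentIn (C \ B) q)) :
    ∃ (x v : EuclideanSpace ℝ (Fin n)), v ≠ 0 ∧ ∀ t : ℝ, x + t • v ∈ C := by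
  classical
  -- bound B by a closed ball
  obtain ⟨R, hBR⟩ := hB.subset_closedBall (0 : EuclideanSpace ℝ (Fin n))
  -- unbounded sequences in each component
  have hxseq : ∀ k : ℕ, ∃ z ∈ connectedComponentIn (C \ B) p, (k:ℝ) < ‖z‖ := by
    intro k
    by_contra h
    push_neg at h
    exact hpu (isBounded_iff_forall_norm_le.mpr ⟨k, h⟩)
  have hyseq : ∀ k : ℕ, ∃ z ∈ connectedComponentIn (C \ B) q, (k:ℝ) < ‖z‖ := by
    intro k
    by_contra h
    push_neg at h
    exact hqu (isBounded_iff_forall_norm_le.mpr ⟨k, h⟩)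
  choose x hxK hxn using hxseq
  choose y hyK hyn using hyseq
  have hxC : ∀ k, x k ∈ C := fun k => (connectedComponentIn_subset _ _ (hxK k)).1
  have hyC : ∀ k, y k ∈ C := fun k => (connectedComponentIn_subset _ _ (hyK k)).1
  have hx0 : ∀ k, (0:ℝ) < ‖x k‖ := fun k => lt_of_le_of_lt (Nat.cast_nonneg k) (hxn k)
  have hy0 : ∀ k, (0:ℝ) < ‖y k‖ := fun k => lt_of_le_of_lt (Nat.cast_nonneg k) (hyn k)
  -- every segment joining x k to y k meets B
  have hseg : ∀ k : ℕ, ∃ s ∈ Set.Icc (0:ℝ) 1, (1 - s) • x k + s • y k ∈ B := by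
    intro k
    by_contra h
    push_neg at h
    have hsub : segment ℝ (x k) (y k) ⊆ C \ B := by
      intro z hz
      refine ⟨hC.segment_subset (hxC k) (hyC k) hz, ?_⟩
      rw [segment_eq_image] at hz
      obtain ⟨s, hs, rfl⟩ := hz
      exact h s hs
    have hyc : y k ∈ connectedComponentIn (C \ B) (x k) :=
      (convex_segment (x k) (y k)).isPreconnected.subset_connectedComponentIn
        (left_mem_segment ℝ _ _) hsub (right_mem_segment ℝ _ _)
    have e1 := connectedComponentIn_eq (hxK k)
    have e2 := connectedComponentIn_eq (hyK k)
    have e3 := connectedComponentIn_eq hyc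
    exact hne (e1.trans (e3.trans e2.symm))
  choose s hsI hsB using hseg
  -- normalizations lie on the unit sphere
  have hUs : ∀ k, ‖x k‖⁻¹ • x k ∈ sphere (0 : EuclideanSpace ℝ (Fin n)) 1 := by
    intro k
    rw [mem_sphere_zero_iff_norm, norm_smul, norm_inv, norm_norm,
      inv_mul_cancel₀ (hx0 k).ne']
  have hWs : ∀ k, ‖y k‖⁻¹ • y k ∈ sphere (0 : EuclideanSpace ℝ (Fin n)) 1 := by
    intro k
    rw [mem_sphere_zero_iff_norm, norm_smul, norm_inv, norm_norm,
      inv_mul_cancel₀ (hy0 k).ne']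
  -- extract convergent subsequences
  obtain ⟨u, huS, φ1, hφ1, hu1⟩ :=
    (isCompact_sphere (0 : EuclideanSpace ℝ (Fin n)) 1).tendsto_subseq hUs
  obtain ⟨w, hwS, φ2, hφ2, hw2⟩ :=
    (isCompact_sphere (0 : EuclideanSpace ℝ (Fin n)) 1).tendsto_subseq (fun k => hWs (φ1 k))
  obtain ⟨σ, hσI, φ3, hφ3, hs3⟩ :=
    (isCompact_Icc (a := (0:ℝ)) (b := 1)).tendsto_subseq (fun k => hsI (φ1 (φ2 k)))
  set ρ : ℕ → ℕ := fun k => φ1 (φ2 (φ3 k)) with hρ_def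
  have hρ : StrictMono ρ := hφ1.comp (hφ2.comp hφ3)
  have hUρ : Tendsto (fun k => ‖x (ρ k)‖⁻¹ • x (ρ k)) atTop (𝓝 u) :=
    hu1.comp (hφ2.comp hφ3).tendsto_atTop
  have hWρ : Tendsto (fun k => ‖y (ρ k)‖⁻¹ • y (ρ k)) atTop (𝓝 w) :=
    hw2.comp hφ3.tendsto_atTop
  have hsρ : Tendsto (fun k => s (ρ k)) atTop (𝓝 σ) := hs3
  have hXnorm : Tendsto (fun k => ‖x (ρ k)‖) atTop atTop := by
    apply tendsto_atTop_mono (fun k => ?_) tendsto_natCast_atTop_atTop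
    calc ((k:ℝ)) ≤ (ρ k : ℝ) := by exact_mod_cast hρ.le_apply
    _ ≤ ‖x (ρ k)‖ := (hxn (ρ k)).le
  have hYnorm : Tendsto (fun k => ‖y (ρ k)‖) atTop atTop := by
    apply tendsto_atTop_mono (fun k => ?_) tendsto_natCast_atTop_atTop
    calc ((k:ℝ)) ≤ (ρ k : ℝ) := by exact_mod_cast hρ.le_apply
    _ ≤ ‖y (ρ k)‖ := (hyn (ρ k)).le
  -- coefficients
  set a : ℕ → ℝ := fun k => (1 - s (ρ k)) * ‖x (ρ k)‖ with ha_def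
  set b : ℕ → ℝ := fun k => s (ρ k) * ‖y (ρ k)‖ with hb_def
  have ha_nn : ∀ k, 0 ≤ a k := fun k =>
    mul_nonneg (by linarith [(hsI (ρ k)).2]) (norm_nonneg _)
  have hb_nn : ∀ k, 0 ≤ b k := fun k =>
    mul_nonneg (hsI (ρ k)).1 (norm_nonneg _)
  have key : ∀ k, ‖a k • (‖x (ρ k)‖⁻¹ • x (ρ k)) + b k • (‖y (ρ k)‖⁻¹ • y (ρ k))‖ ≤ R := by
    intro k
    have e1 : a k • (‖x (ρ k)‖⁻¹ • x (ρ k)) = (1 - s (ρ k)) • x (ρ k) := by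
      rw [smul_smul, ha_def, mul_assoc, mul_inv_cancel₀ (hx0 (ρ k)).ne', mul_one]
    have e2 : b k • (‖y (ρ k)‖⁻¹ • y (ρ k)) = s (ρ k) • y (ρ k) := by
      rw [smul_smul, hb_def, mul_assoc, mul_inv_cancel₀ (hy0 (ρ k)).ne', mul_one]
    rw [e1, e2, ← mem_closedBall_zero_iff]
    exact hBR (hsB (ρ k))
  have h_ab : ∀ k, |a k - b k| ≤ R := by
    intro k
    have nU : ‖a k • (‖x (ρ k)‖⁻¹ • x (ρ k))‖ = a k := by
      rw [norm_smul, Real.norm_eq_abs, abs_of_nonneg (ha_nn k),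
        mem_sphere_zero_iff_norm.mp (hUs (ρ k)), mul_one]
    have nW : ‖b k • (‖y (ρ k)‖⁻¹ • y (ρ k))‖ = b k := by
      rw [norm_smul, Real.norm_eq_abs, abs_of_nonneg (hb_nn k),
        mem_sphere_zero_iff_norm.mp (hWs (ρ k)), mul_one]
    have h1 : a k ≤ R + b k := by
      have e : a k • (‖x (ρ k)‖⁻¹ • x (ρ k))
          = (a k • (‖x (ρ k)‖⁻¹ • x (ρ k)) + b k • (‖y (ρ k)‖⁻¹ • y (ρ k)))
            - b k • (‖y (ρ k)‖⁻¹ • y (ρ k)) := by abel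
      have h := norm_sub_le (a k • (‖x (ρ k)‖⁻¹ • x (ρ k)) + b k • (‖y (ρ k)‖⁻¹ • y (ρ k)))
        (b k • (‖y (ρ k)‖⁻¹ • y (ρ k)))
      rw [← e, nU, nW] at h
      linarith [key k]
    have h2 : b k ≤ R + a k := by
      have e : b k • (‖y (ρ k)‖⁻¹ • y (ρ k))
          = (a k • (‖x (ρ k)‖⁻¹ • x (ρ k)) + b k • (‖y (ρ k)‖⁻¹ • y (ρ k)))
            - a k • (‖x (ρ k)‖⁻¹ • x (ρ k)) := by abel
      have h := norm_sub_le (a k • (‖x (ρ k)‖⁻¹ • x (ρ k)) + b k • (‖y (ρ k)‖⁻¹ • y (ρ k)))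
        (a k • (‖x (ρ k)‖⁻¹ • x (ρ k)))
      rw [← e, nU, nW] at h
      linarith [key k]
    rw [abs_le]
    constructor <;> linarith
  -- both a and b tend to infinity
  have step : ∀ f g : ℕ → ℝ, (∀ k, |f k - g k| ≤ R) → Tendsto g atTop atTop →
      Tendsto f atTop atTop := by
    intro f g hfg hg
    apply tendsto_atTop_mono (fun k => ?_) (tendsto_atTop_add_const_right _ (-R) hg)
    have := (abs_le.mp (hfg k)).1
    linarith
  have hab : Tendsto a atTop atTop ∧ Tendsto b atTop atTop := by
    rcases lt_or_ge 0 σ with hσ0 | hσ0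
    · have hb : Tendsto b atTop atTop := Tendsto.pos_mul_atTop hσ0 hsρ hYnorm
      exact ⟨step a b h_ab hb, hb⟩
    · have hσe : σ = 0 := le_antisymm hσ0 hσI.1
      have h1σ : Tendsto (fun k => 1 - s (ρ k)) atTop (𝓝 1) := by
        have := (tendsto_const_nhds (x := (1:ℝ)) (f := atTop)).sub hsρ
        rw [hσe, sub_zero] at this
        exact this
      have ha : Tendsto a atTop atTop := Tendsto.pos_mul_atTop one_pos h1σ hXnorm
      exact ⟨ha, step b a (fun k => by rw [abs_sub_comm]; exact h_ab k) ha⟩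
  obtain ⟨haT, hbT⟩ := hab
  -- b/a → 1
  have hRa : Tendsto (fun k => R / a k) atTop (𝓝 0) :=
    Tendsto.div_atTop tendsto_const_nhds haT
  have hba : Tendsto (fun k => b k / a k) atTop (𝓝 1) := by
    have h0 : Tendsto (fun k => b k / a k - 1) atTop (𝓝 0) := by
      apply squeeze_zero_norm' ?_ hRa
      filter_upwards [haT.eventually_gt_atTop 0] with k hk
      have : b k / a k - 1 = (b k - a k) / a k := by field_simp
      rw [Real.norm_eq_abs, this, abs_div, abs_of_pos hk]
      gcongr
      rw [abs_sub_comm]; exact h_ab k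
    have := h0.add_const 1
    simpa using this
  -- the combination tends to 0
  have hzero : Tendsto
      (fun k => (‖x (ρ k)‖⁻¹ • x (ρ k)) + (b k / a k) • (‖y (ρ k)‖⁻¹ • y (ρ k)))
      atTop (𝓝 0) := by
    apply squeeze_zero_norm' ?_ hRa
    filter_upwards [haT.eventually_gt_atTop 0] with k hk
    have heq : (‖x (ρ k)‖⁻¹ • x (ρ k)) + (b k / a k) • (‖y (ρ k)‖⁻¹ • y (ρ k))
        = (a k)⁻¹ • (a k • (‖x (ρ k)‖⁻¹ • x (ρ k)) + b k • (‖y (ρ k)‖⁻¹ • y (ρ k))) :=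
      smul_comb_eq hk.ne' _ _ _
    rw [heq, norm_smul, norm_inv, Real.norm_eq_abs, abs_of_pos hk, div_eq_inv_mul]
    exact mul_le_mul_of_nonneg_left (key k) (inv_nonneg.mpr hk.le)
  -- hence u + w = 0
  have hsum : Tendsto
      (fun k => (‖x (ρ k)‖⁻¹ • x (ρ k)) + (b k / a k) • (‖y (ρ k)‖⁻¹ • y (ρ k)))
      atTop (𝓝 (u + w)) := by
    have := hUρ.add (hba.smul hWρ)
    simpa using this
  have h0uw : u + w = 0 := tendsto_nhds_unique hsum hzero
  have hw_eq : w = -u := eq_neg_of_add_eq_zero_right h0uw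
  -- rays
  have hray_p : ∀ t : ℝ, 0 ≤ t → p + t • u ∈ C := fun t ht =>
    ray_mem_of_tendsto hC hCcl hp.1 (fun k => hxC (ρ k)) hXnorm hUρ ht
  have hray_q : ∀ t : ℝ, 0 ≤ t → q - t • u ∈ C := by
    intro t ht
    have := ray_mem_of_tendsto hC hCcl hq.1 (fun k => hyC (ρ k)) hYnorm hWρ ht
    rw [hw_eq] at this
    simpa [smul_neg, sub_eq_add_neg] using this
  refine ⟨p, u, ?_, ?_⟩
  · intro h
    rw [h, mem_sphere_zero_iff_norm, norm_zero] at huS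
    exact one_ne_zero huS.symm
  · intro t
    rcases le_or_gt 0 t with ht | ht
    · exact hray_p t ht
    · have := opp_ray_mem hC hCcl hp.1 hray_q (neg_nonneg.mpr ht.le)
      rw [neg_smul, sub_neg_eq_add] at this
      exact this
end

section
/- Let n ≥ 2 and let S ⊆ ℝⁿ × ℝ = ℝ^{n+1} be a set of Hausdorff dimension at most 1 (with respect to the Euclidean metric on ℝ^{n+1}). Then for any x, y ∈ ℝⁿ and any real numbers s < t there exists a continuous curve γ : [s,t] → ℝⁿ with γ(s) = x and γ(t) = y such that (γ(r), r) ∉ S for all r ∈ (s,t). -/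
/-- Let `n ≥ 2` and let `S ⊆ ℝⁿ × ℝ` have Hausdorff dimension at most `1`.
Then for any `x, y ∈ ℝⁿ` and any reals `s < t` there exists a continuous curve
`γ : [s,t] → ℝⁿ` with `γ s = x`, `γ t = y`, such that `(γ r, r) ∉ S` for all `r ∈ (s,t)`. -/
theorem exists_timelike_curve_avoiding_dimH_le_one
    {n : ℕ} (hn : 2 ≤ n) (S : Set (EuclideanSpace ℝ (Fin n) × ℝ))
    (hS : dimH S ≤ 1) :
    ∀ (x y : EuclideanSpace ℝ (Fin n)) (s t : ℝ), s < t →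
      ∃ γ : ℝ → EuclideanSpace ℝ (Fin n),
        ContinuousOn γ (Set.Icc s t) ∧ γ s = x ∧ γ t = y ∧
        ∀ r ∈ Set.Ioo s t, (γ r, r) ∉ S := by
  intro x y s t hst
  let E := EuclideanSpace ℝ (Fin n)
  have hts : t - s ≠ 0 := sub_ne_zero.mpr hst.ne'
  -- the straight line from x to y and the bump function
  set L : ℝ → E := fun r => x + ((r - s) / (t - s)) • (y - x) with hL
  set φ : ℝ → ℝ := fun r => (r - s) * (t - r) with hφ
  have hφpos : ∀ r ∈ Set.Ioo s t, 0 < φ r := fun r hr =>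
    mul_pos (sub_pos.mpr hr.1) (sub_pos.mpr hr.2)
  -- the "recovery" map
  set Ψ : E × ℝ → E := fun p => (φ p.2)⁻¹ • (p.1 - L p.2) with hΨ
  set S' : Set (E × ℝ) := S ∩ (Set.univ ×ˢ Set.Ioo s t) with hS'
  -- Ψ is locally Lipschitz on S', so the image has dimension ≤ 1
  have hdim : dimH (Ψ '' S') ≤ 1 := by
    refine le_trans (dimH_image_le_of_locally_lipschitzOn ?_) ?_
    · intro p hp
      have hp2 : p.2 ∈ Set.Ioo s t := hp.2.2
      have hφp : φ p.2 ≠ 0 := (hφpos _ hp2).ne'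
      have hcd : ContDiffAt ℝ 1 Ψ p := by
        have h1 : ContDiffAt ℝ 1 (fun p : E × ℝ => (φ p.2)⁻¹) p := by
          refine ContDiffAt.inv ?_ hφp
          exact ((contDiff_snd.sub contDiff_const).mul
            (contDiff_const.sub contDiff_snd)).contDiffAt
        have h2 : ContDiffAt ℝ 1 (fun p : E × ℝ => p.1 - L p.2) p := by
          refine ContDiffAt.sub contDiffAt_fst ?_
          refine ContDiffAt.add contDiffAt_const ?_
          exact (((contDiff_snd.sub contDiff_const).div_const _).smul
            contDiff_const).contDiffAt
        exact h1.smul h2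
      obtain ⟨K, u, hu, hlip⟩ := hcd.exists_lipschitzOnWith
      exact ⟨K, u, nhdsWithin_le_nhds hu, hlip⟩
    · exact le_trans (dimH_mono Set.inter_subset_left) hS
  -- pick a direction v avoiding the bad set
  have hnot : ¬ (Set.univ : Set E) ⊆ Ψ '' S' := by
    intro hsub
    have h1 : dimH (Set.univ : Set E) ≤ 1 := le_trans (dimH_mono hsub) hdim
    rw [Real.dimH_univ_eq_finrank, finrank_euclideanSpace_fin] at h1
    have : (1 : ENNReal) < (n : ENNReal) := by exact_mod_cast lt_of_lt_of_le one_lt_two (by exact_mod_cast hn)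
    exact absurd h1 (not_le.mpr this)
  obtain ⟨v, -, hv⟩ := Set.not_subset.mp hnot
  refine ⟨fun r => L r + φ r • v, ?_, ?_, ?_, ?_⟩
  · apply Continuous.continuousOn
    apply Continuous.add
    · exact continuous_const.add
        (((continuous_id.sub continuous_const).div_const _).smul continuous_const)
    · exact (((continuous_id.sub continuous_const).mul
        (continuous_const.sub continuous_id))).smul continuous_const
  · simp [hL, hφ]
  · simp [hL, hφ, div_self hts]
  · intro r hr hmem
    apply hv
    refine ⟨(L r + φ r • v, r), ⟨hmem, ⟨Set.mem_univ _, hr⟩⟩, ?_⟩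
    have hφr : φ r ≠ 0 := (hφpos r hr).ne'
    simp only [hΨ]
    rw [add_sub_cancel_left, smul_smul, inv_mul_cancel₀ hφr, one_smul]
end
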